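/- arXiv:1803.07763 — 2 statements merged into one kernel-verified Lean document; each statement's English description precedes it below -/
import Mathlib

section
/- Suppose that for some integer k ∈ {1, …, d} and some k-dimensional orthogonal projection Π_k of ℝ^d there is a constant c < ∞ such that inf_{γ ∈ Γ(θ*, δ, Π_k)} Σ_{i=1}^d γ_i ≤ c·δ²·k for all δ > 0. Then there is a constant c_u (depending only on c) such that G(E_{θ*} ∩ B(δ)) ≤ c_u·δ·√k for all δ > 0. -/
open MeasureTheory ProbabilityTheory Metric Set Filter
open scoped BigOperators ENNReal NNReal RealInnerProductSpace Classical

noncomputable section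

namespace GaussKol

/-- The standard Gaussian measure on `EuclideanSpace ℝ (Fin d)`. -/
def stdGaussian (d : ℕ) : Measure (EuclideanSpace ℝ (Fin d)) :=
  (Measure.pi fun _ : Fin d => gaussianReal 0 1).map
    (MeasurableEquiv.toLp 2 (Fin d → ℝ))

/-- The Gaussian width of a set `S ⊆ ℝ^d`. -/
def gaussianWidth {d : ℕ} (S : Set (EuclideanSpace ℝ (Fin d))) : ℝ :=
  ∫ w, (⨆ u ∈ S, ⟪w, u⟫) ∂(stdGaussian d)

/-- The ellipse with aspect ratios `μ`. -/
def ellipse {d : ℕ} (μ : Fin d → ℝ) : Set (EuclideanSpace ℝ (Fin d)) :=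
  {θ | ∑ j, θ j ^ 2 / μ j ≤ 1}

/-- The squared elliptical norm. -/
def enormSq {d : ℕ} (μ : Fin d → ℝ) (θ : EuclideanSpace ℝ (Fin d)) : ℝ :=
  ∑ j, θ j ^ 2 / μ j

/-- The recentered ellipse `E_{θ*}`. -/
def shiftedEllipse {d : ℕ} (μ : Fin d → ℝ) (θs : EuclideanSpace ℝ (Fin d)) :
    Set (EuclideanSpace ℝ (Fin d)) :=
  (fun θ => θ - θs) '' ellipse μ

/-- Orthogonal projection onto a subspace, as a self-map of `ℝ^d`. -/
def projK {d : ℕ} (K : Submodule ℝ (EuclideanSpace ℝ (Fin d)))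
    (x : EuclideanSpace ℝ (Fin d)) : EuclideanSpace ℝ (Fin d) :=
  (Submodule.orthogonalProjectionOnto K x : EuclideanSpace ℝ (Fin d))

/-- The Kolmogorov `k`-width of a set `S ⊆ ℝ^d`. -/
def kolWidth {d : ℕ} (k : ℕ) (S : Set (EuclideanSpace ℝ (Fin d))) : ℝ :=
  ⨅ K : {K : Submodule ℝ (EuclideanSpace ℝ (Fin d)) // Module.finrank ℝ K = k},
    ⨆ θ ∈ S, ‖θ - projK K.1 θ‖

/-- The critical dimension `k(θ*, δ)`. -/
def critDim {d : ℕ} (η : ℝ) (μ : Fin d → ℝ) (θs : EuclideanSpace ℝ (Fin d)) (δ : ℝ) : ℕ :=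
  sInf {k : ℕ | 1 ≤ k ∧ k ≤ d ∧
    kolWidth k (shiftedEllipse μ θs ∩ closedBall 0 ((1 - η) * δ)) ≤ (9 / 10) * δ}

/-- The set `Γ(θ*, δ, Π_k)`. -/
def Gam {d : ℕ} (μ : Fin d → ℝ) (θs : EuclideanSpace ℝ (Fin d)) (δ : ℝ)
    (K : Submodule ℝ (EuclideanSpace ℝ (Fin d))) : Set (Fin d → ℝ) :=
  {γ | (∀ i, 0 < γ i) ∧
    ∀ Δ ∈ shiftedEllipse μ θs ∩ closedBall 0 δ,
      ∑ i, (Δ i - projK K Δ i) ^ 2 / γ i ≤ 1}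

/-- The function `Φ`. -/
def Phi {d : ℕ} (η : ℝ) (μ : Fin d → ℝ) (θs : EuclideanSpace ℝ (Fin d)) (δ : ℝ) : ℝ :=
  if ‖θs‖ / (1 - η) < δ then 1
  else min 1 (sInf {r : ℝ | 0 ≤ r ∧
    δ ^ 2 ≤ ((1 - η) ^ 2)⁻¹ * ∑ i, r ^ 2 * θs i ^ 2 / (r + μ i) ^ 2})

/-- `Φ⁻¹(x)`: the largest `δ > 0` with `Φ(δ) ≤ x` (equal to `∞` when unbounded). -/
def PhiInv {d : ℕ} (η : ℝ) (μ : Fin d → ℝ) (θs : EuclideanSpace ℝ (Fin d)) (x : ℝ) : ℝ≥0∞ :=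
  ⨆ (δ : ℝ) (_ : 0 < δ ∧ Phi η μ θs δ ≤ x), ENNReal.ofReal δ

/-- The `ε`-packing number of `S` in Euclidean distance. -/
def packingNumber {d : ℕ} (ε : ℝ) (S : Set (EuclideanSpace ℝ (Fin d))) : ℕ :=
  sSup {n : ℕ | ∃ T : Finset (EuclideanSpace ℝ (Fin d)),
    ↑T ⊆ S ∧ (∀ x ∈ T, ∀ y ∈ T, x ≠ y → ε < dist x y) ∧ T.card = n}

/-- Regularity of the ellipse at `θ*`, with explicit constant `c`. -/
def regularAtWith {d : ℕ} (η : ℝ) (μ : Fin d → ℝ) (θs : EuclideanSpace ℝ (Fin d))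
    (c : ℝ) : Prop :=
  ∀ δ : ℝ, 0 < δ →
    ∃ K : Submodule ℝ (EuclideanSpace ℝ (Fin d)),
      Module.finrank ℝ K = critDim η μ θs δ ∧
      (⨆ θ ∈ shiftedEllipse μ θs ∩ closedBall 0 ((1 - η) * δ), ‖θ - projK K θ‖)
        ≤ kolWidth (critDim η μ θs δ) (shiftedEllipse μ θs ∩ closedBall 0 ((1 - η) * δ)) ∧
      sInf ((fun γ : Fin d → ℝ => ∑ i, γ i) '' Gam μ θs δ K)
        ≤ c * δ ^ 2 * critDim η μ θs δ

/-- The minimax risk of estimation over the ellipse with noise level `σ`. -/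
def minimaxRisk (d : ℕ) (μ : Fin d → ℝ) (σ : ℝ) : ℝ :=
  ⨅ est : {f : EuclideanSpace ℝ (Fin d) → EuclideanSpace ℝ (Fin d) // Measurable f},
    ⨆ θs ∈ ellipse μ, ∫ w, ‖est.1 (θs + σ • w) - θs‖ ^ 2 ∂(stdGaussian d)

end GaussKol

open GaussKol

/-!
For `u ∈ E_{θ*} ∩ B(δ)` split `⟪w, u⟫ = ⟪Π_k w, u⟫ + ⟪w, u - Π_k u⟫`. The first term is at most
`δ ‖Π_k w‖`, and for any `γ ∈ Γ(θ*, δ, Π_k)` the weighted Cauchy–Schwarz inequality bounds the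
second by `(∑ i, γ i * w i ^ 2) ^ (1/2)`. Neither bound depends on `u`, and by Jensen their Gaussian
expectations are at most `δ √k` and `(∑ i, γ i) ^ (1/2)`. Choosing `γ` with
`∑ i, γ i ≤ (|c| + 1) δ² k` gives `c_u = 1 + √(|c| + 1)`.
-/

namespace GaussKol

lemma integral_le_sqrt_integral_sq {Ω : Type*} [MeasurableSpace Ω] {P : Measure Ω}
    [IsProbabilityMeasure P] {f : Ω → ℝ} (hf : MemLp f 2 P) :
    ∫ x, f x ∂P ≤ √(∫ x, f x ^ 2 ∂P) := by
  have h := variance_nonneg f P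
  rw [variance_eq_sub hf] at h
  exact Real.le_sqrt_of_sq_le (by simpa using h)

lemma sum_mul_le_sqrt_sum_mul_sq {ι : Type*} [Fintype ι] {γ x y : ι → ℝ} (hγ : ∀ i, 0 < γ i)
    (hy : ∑ i, y i ^ 2 / γ i ≤ 1) :
    ∑ i, x i * y i ≤ √(∑ i, γ i * x i ^ 2) := by
  have hCS := Real.sum_mul_le_sqrt_mul_sqrt Finset.univ (fun i ↦ √(γ i) * x i)
    (fun i ↦ y i / √(γ i))
  have hx_sq : ∀ i, (√(γ i) * x i) ^ 2 = γ i * x i ^ 2 := fun i ↦ by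
    rw [mul_pow, Real.sq_sqrt (hγ i).le]
  have hy_sq : ∀ i, (y i / √(γ i)) ^ 2 = y i ^ 2 / γ i := fun i ↦ by
    rw [div_pow, Real.sq_sqrt (hγ i).le]
  have hxy : ∀ i, √(γ i) * x i * (y i / √(γ i)) = x i * y i := fun i ↦ by
    field_simp [(Real.sqrt_pos.2 (hγ i)).ne']
  simp only [hx_sq, hy_sq, hxy] at hCS
  calc ∑ i, x i * y i ≤ √(∑ i, γ i * x i ^ 2) * √(∑ i, y i ^ 2 / γ i) := hCS
    _ ≤ √(∑ i, γ i * x i ^ 2) * 1 := by gcongr; exact Real.sqrt_le_one.2 hy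
    _ = √(∑ i, γ i * x i ^ 2) := mul_one _

section StdGaussian

variable {E : Type*} [NormedAddCommGroup E] [InnerProductSpace ℝ E] [FiniteDimensional ℝ E]

lemma norm_orthogonalProjectionOnto_eq_sqrt (K : Submodule ℝ E) (w : E) :
    ‖K.orthogonalProjectionOnto w‖ = √(∑ j, ⟪(stdOrthonormalBasis ℝ K j : E), w⟫ ^ 2) := by
  rw [← Real.sqrt_sq (norm_nonneg _), ← (stdOrthonormalBasis ℝ K).sum_sq_inner_right]
  simp_rw [Submodule.inner_orthogonalProjectionOnto_eq_of_mem_left]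

variable [MeasurableSpace E] [BorelSpace E]

lemma integral_inner_sq_stdGaussian (v : E) :
    ∫ w, ⟪v, w⟫ ^ 2 ∂ProbabilityTheory.stdGaussian E = ‖v‖ ^ 2 := by
  have h := covarianceBilin_apply (μ := ProbabilityTheory.stdGaussian E)
    IsGaussian.memLp_two_id v v
  simp only [covarianceBilin_stdGaussian, id_eq, integral_id_stdGaussian, sub_zero] at h
  rw [← real_inner_self_eq_norm_sq, ← innerSL_apply_apply ℝ, h]
  simp only [sq]

lemma integrable_inner_sq_stdGaussian (v : E) :
    Integrable (fun w ↦ ⟪v, w⟫ ^ 2) (ProbabilityTheory.stdGaussian E) :=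
  (IsGaussian.memLp_two_id.continuousLinearMap_comp (innerSL ℝ v)).integrable_sq

variable {ι : Type*} [Fintype ι]

lemma memLp_sqrt_sum_inner_sq_stdGaussian (v : ι → E) :
    MemLp (fun w ↦ √(∑ i, ⟪v i, w⟫ ^ 2)) 2 (ProbabilityTheory.stdGaussian E) := by
  refine (memLp_two_iff_integrable_sq (by fun_prop)).2 ?_
  simp_rw [Real.sq_sqrt (Finset.sum_nonneg fun i _ ↦ sq_nonneg ⟪v i, _⟫)]
  exact integrable_finsetSum _ fun i _ ↦ integrable_inner_sq_stdGaussian (v i)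

lemma integral_sqrt_sum_inner_sq_stdGaussian_le (v : ι → E) :
    ∫ w, √(∑ i, ⟪v i, w⟫ ^ 2) ∂ProbabilityTheory.stdGaussian E ≤ √(∑ i, ‖v i‖ ^ 2) := by
  refine (integral_le_sqrt_integral_sq (memLp_sqrt_sum_inner_sq_stdGaussian v)).trans_eq ?_
  simp_rw [Real.sq_sqrt (Finset.sum_nonneg fun i _ ↦ sq_nonneg ⟪v i, _⟫)]
  rw [integral_finsetSum _ fun i _ ↦ integrable_inner_sq_stdGaussian (v i)]
  simp_rw [integral_inner_sq_stdGaussian]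

lemma integrable_norm_orthogonalProjectionOnto_stdGaussian (K : Submodule ℝ E) :
    Integrable (fun w ↦ ‖K.orthogonalProjectionOnto w‖) (ProbabilityTheory.stdGaussian E) := by
  simp_rw [norm_orthogonalProjectionOnto_eq_sqrt]
  exact (memLp_sqrt_sum_inner_sq_stdGaussian _).integrable one_le_two

lemma integral_norm_orthogonalProjectionOnto_stdGaussian_le (K : Submodule ℝ E) :
    ∫ w, ‖K.orthogonalProjectionOnto w‖ ∂ProbabilityTheory.stdGaussian E ≤
      √(Module.finrank ℝ K) := by
  simp_rw [norm_orthogonalProjectionOnto_eq_sqrt]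
  refine (integral_sqrt_sum_inner_sq_stdGaussian_le _).trans_eq ?_
  simp only [Submodule.norm_coe, OrthonormalBasis.norm_eq_one, one_pow, Finset.sum_const,
    Finset.card_univ, Fintype.card_fin, nsmul_eq_mul, mul_one]

end StdGaussian

section Weighted

variable {ι : Type*} [Fintype ι] {γ : ι → ℝ}

lemma sum_mul_sq_eq_sum_inner_sq (hγ : ∀ i, 0 ≤ γ i) (w : EuclideanSpace ℝ ι) :
    ∑ i, γ i * w i ^ 2 = ∑ i, ⟪√(γ i) • EuclideanSpace.single i 1, w⟫ ^ 2 := by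
  simp_rw [real_inner_smul_left, EuclideanSpace.inner_single_left, mul_pow, Real.sq_sqrt (hγ _)]
  simp

lemma integrable_sqrt_sum_mul_sq_stdGaussian (hγ : ∀ i, 0 ≤ γ i) :
    Integrable (fun w : EuclideanSpace ℝ ι ↦ √(∑ i, γ i * w i ^ 2))
      (ProbabilityTheory.stdGaussian _) := by
  simp_rw [sum_mul_sq_eq_sum_inner_sq hγ]
  exact (memLp_sqrt_sum_inner_sq_stdGaussian _).integrable one_le_two

lemma integral_sqrt_sum_mul_sq_stdGaussian_le (hγ : ∀ i, 0 ≤ γ i) :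
    ∫ w : EuclideanSpace ℝ ι, √(∑ i, γ i * w i ^ 2) ∂ProbabilityTheory.stdGaussian _ ≤
      √(∑ i, γ i) := by
  simp_rw [sum_mul_sq_eq_sum_inner_sq hγ]
  refine (integral_sqrt_sum_inner_sq_stdGaussian_le _).trans_eq ?_
  simp_rw [norm_smul, PiLp.norm_single, norm_one, mul_one, Real.norm_eq_abs, sq_abs,
    Real.sq_sqrt (hγ _)]

lemma inner_le_norm_orthogonalProjectionOnto_mul_add (K : Submodule ℝ (EuclideanSpace ℝ ι))
    (hγ : ∀ i, 0 < γ i) {u : EuclideanSpace ℝ ι}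
    (hu : ∑ i, (u i - K.starProjection u i) ^ 2 / γ i ≤ 1) (w : EuclideanSpace ℝ ι) :
    ⟪w, u⟫ ≤ ‖K.orthogonalProjectionOnto w‖ * ‖u‖ + √(∑ i, γ i * w i ^ 2) := by
  have hsplit : ⟪w, u⟫ = ⟪K.starProjection w, u⟫ + ⟪w, u - K.starProjection u⟫ := by
    rw [K.inner_starProjection_left_eq_right, ← inner_add_right, add_sub_cancel]
  have hK : ⟪K.starProjection w, u⟫ ≤ ‖K.orthogonalProjectionOnto w‖ * ‖u‖ :=
    (real_inner_le_norm _ _).trans_eq (by rw [K.starProjection_apply, Submodule.norm_coe])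
  have hKperp : ⟪w, u - K.starProjection u⟫ ≤ √(∑ i, γ i * w i ^ 2) := by
    rw [PiLp.inner_apply]
    simpa only [RCLike.inner_apply, conj_trivial, PiLp.sub_apply, mul_comm]
      using sum_mul_le_sqrt_sum_mul_sq hγ hu
  linarith

end Weighted

variable {d : ℕ}

lemma stdGaussian_eq (d : ℕ) :
    stdGaussian d = ProbabilityTheory.stdGaussian (EuclideanSpace ℝ (Fin d)) :=
  map_pi_eq_stdGaussian

/-- `⨆ u ∈ S` takes the junk value `0` at `u ∉ S`, and `∫` is `0` on non-integrable functions;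
`0 ≤ g` makes both harmless. -/
lemma gaussianWidth_le_integral {S : Set (EuclideanSpace ℝ (Fin d))}
    {g : EuclideanSpace ℝ (Fin d) → ℝ} (hg : Integrable g (ProbabilityTheory.stdGaussian _))
    (hg0 : 0 ≤ g) (h : ∀ w, ∀ u ∈ S, ⟪w, u⟫ ≤ g w) :
    gaussianWidth S ≤ ∫ w, g w ∂ProbabilityTheory.stdGaussian _ := by
  have hle : ∀ w, (⨆ u ∈ S, ⟪w, u⟫) ≤ g w := fun w ↦
    Real.iSup_le (fun u ↦ Real.iSup_le (h w u) (hg0 w)) (hg0 w)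
  rw [gaussianWidth, stdGaussian_eq]
  by_cases hint : Integrable (fun w ↦ ⨆ u ∈ S, ⟪w, u⟫) (ProbabilityTheory.stdGaussian _)
  · exact integral_mono hint hg hle
  · rw [integral_undef hint]
    exact integral_nonneg hg0

section Gam

variable {μ : Fin d → ℝ} {θs : EuclideanSpace ℝ (Fin d)} {δ : ℝ}
  {K : Submodule ℝ (EuclideanSpace ℝ (Fin d))}

lemma const_sq_mem_Gam (hδ : 0 < δ) : (fun _ ↦ δ ^ 2) ∈ Gam μ θs δ K := by
  refine ⟨fun _ ↦ by positivity, fun Δ hΔ ↦ ?_⟩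
  have hperp : ‖Δ - K.starProjection Δ‖ ≤ ‖Δ‖ := by
    rw [← Submodule.starProjection_orthogonal_val]
    exact Kᗮ.norm_starProjection_apply_le Δ
  rw [← Finset.sum_div, div_le_one (by positivity)]
  calc ∑ i, (Δ i - projK K Δ i) ^ 2 = ‖Δ - K.starProjection Δ‖ ^ 2 := by
        rw [EuclideanSpace.real_norm_sq_eq]; rfl
    _ ≤ δ ^ 2 := by gcongr; exact hperp.trans (mem_closedBall_zero_iff.1 hΔ.2)

lemma exists_mem_Gam_sum_lt {b : ℝ} (hδ : 0 < δ)
    (h : sInf ((fun γ : Fin d → ℝ ↦ ∑ i, γ i) '' Gam μ θs δ K) < b) :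
    ∃ γ ∈ Gam μ θs δ K, ∑ i, γ i < b := by
  obtain ⟨_, ⟨γ, hγ, rfl⟩, hlt⟩ :=
    exists_lt_of_csInf_lt (Set.Nonempty.image _ ⟨_, const_sq_mem_Gam hδ⟩) h
  exact ⟨γ, hγ, hlt⟩

end Gam

end GaussKol

/-- **Corollary (regularity implies a clean width bound).**
If for some dimension/projection pair `(k, Π_k)` there is a constant `c` with
`inf_{γ ∈ Γ(θ*, δ, Π_k)} ∑ i γ i ≤ c δ² k` for all `δ > 0`, then there is a constant `c_u`
(depending only on `c`) such that `G(E_{θ*} ∩ B(δ)) ≤ c_u δ √k` for all `δ > 0`. -/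
theorem regular_gaussian_width_upper_bound (c : ℝ) :
    ∃ c_u : ℝ, 0 < c_u ∧
      ∀ (d : ℕ) (μ : Fin d → ℝ), (∀ i, 0 < μ i) → (∀ i j : Fin d, i ≤ j → μ j ≤ μ i) →
        ∀ θs : EuclideanSpace ℝ (Fin d), θs ∈ ellipse μ →
        ∀ k : ℕ, 1 ≤ k → k ≤ d →
        ∀ K : Submodule ℝ (EuclideanSpace ℝ (Fin d)), Module.finrank ℝ K = k →
        (∀ δ : ℝ, 0 < δ →
          sInf ((fun γ : Fin d → ℝ => ∑ i, γ i) '' Gam μ θs δ K) ≤ c * δ ^ 2 * k) →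
        ∀ δ : ℝ, 0 < δ →
          gaussianWidth (shiftedEllipse μ θs ∩ closedBall 0 δ) ≤ c_u * δ * Real.sqrt k := by
  refine ⟨1 + √(|c| + 1), by positivity, ?_⟩
  intro d μ _ _ θs _ k hk _ K hK hΓ δ hδ
  obtain ⟨γ, hγΓ, hγ⟩ : ∃ γ ∈ Gam μ θs δ K, ∑ i, γ i < (|c| + 1) * δ ^ 2 * k :=
    exists_mem_Gam_sum_lt hδ <| (hΓ δ hδ).trans_lt <| by gcongr; linarith [le_abs_self c]
  have hγ0 : ∀ i, 0 ≤ γ i := fun i ↦ (hγΓ.1 i).le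
  calc gaussianWidth (shiftedEllipse μ θs ∩ closedBall 0 δ)
      ≤ ∫ w : EuclideanSpace ℝ (Fin d), δ * ‖K.orthogonalProjectionOnto w‖ +
          √(∑ i, γ i * w i ^ 2) ∂ProbabilityTheory.stdGaussian _ := by
        refine gaussianWidth_le_integral
          (((integrable_norm_orthogonalProjectionOnto_stdGaussian K).const_mul δ).add
            (integrable_sqrt_sum_mul_sq_stdGaussian hγ0)) (fun w ↦ by positivity)
          fun w u hu ↦ (inner_le_norm_orthogonalProjectionOnto_mul_add K hγΓ.1
            (hγΓ.2 u hu) w).trans ?_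
        rw [mul_comm δ]
        gcongr
        exact mem_closedBall_zero_iff.1 hu.2
    _ = δ * ∫ w, ‖K.orthogonalProjectionOnto w‖ ∂ProbabilityTheory.stdGaussian _ +
          ∫ w : EuclideanSpace ℝ (Fin d), √(∑ i, γ i * w i ^ 2)
            ∂ProbabilityTheory.stdGaussian _ := by
        rw [integral_add ((integrable_norm_orthogonalProjectionOnto_stdGaussian K).const_mul δ)
          (integrable_sqrt_sum_mul_sq_stdGaussian hγ0), integral_const_mul]
    _ ≤ δ * √k + √((|c| + 1) * δ ^ 2 * k) := by
        gcongr
        · exact hK ▸ integral_norm_orthogonalProjectionOnto_stdGaussian_le K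
        · exact (integral_sqrt_sum_mul_sq_stdGaussian_le hγ0).trans (Real.sqrt_le_sqrt hγ.le)
    _ = (1 + √(|c| + 1)) * δ * √k := by
        rw [Real.sqrt_mul (by positivity), Real.sqrt_mul (by positivity), Real.sqrt_sq hδ.le]
        ring
end
end

section
/- For every δ > 0, the critical dimension at θ* = 0 satisfies k(0, δ) = min{ k ∈ {1, …, d} : μ_{k+1} ≤ (81/100)·δ² }, with the convention that k(0, δ) = d if the set on the right-hand side is empty (interpreting μ_{d+1} := 0). -/
open MeasureTheory ProbabilityTheory Metric Set Filter
open scoped BigOperators ENNReal NNReal RealInnerProductSpace Classical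

noncomputable section

open GaussKol

/-!
At `θ* = 0` the widths of `E ∩ B(r)` are explicit: `W_k = min (√μ_{k+1}) r`. Projecting onto the
first `k` coordinates leaves a tail of squared length at most `μ_{k+1} ‖θ‖_E²`. Conversely, every
`k`-dimensional subspace is orthogonal to some vector supported on the first `k + 1` coordinates;
rescaled to length `min (√μ_{k+1}) r` it lies in `E ∩ B(r)` and projects to `0`. As
`(1 - η) δ > 0.9 δ`, the condition `W_k ≤ 0.9 δ` is then `μ_{k+1} ≤ 0.81 δ²`.
-/

section OrthogonalComplement

variable {E : Type*} [NormedAddCommGroup E] [InnerProductSpace ℝ E] [FiniteDimensional ℝ E]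

theorem Submodule.exists_mem_inf_orthogonal_norm_eq {K V : Submodule ℝ E}
    (h : Module.finrank ℝ K < Module.finrank ℝ V) {r : ℝ} (hr : 0 ≤ r) :
    ∃ u ∈ V, u ∈ Kᗮ ∧ ‖u‖ = r := by
  have hpos : 0 < Module.finrank ℝ ↥(V ⊓ Kᗮ) := by
    have := Submodule.finrank_sup_add_finrank_inf_eq V Kᗮ
    have := K.finrank_add_finrank_orthogonal
    have := (V ⊔ Kᗮ).finrank_le
    omega
  have := Module.finrank_pos_iff.mp hpos
  obtain ⟨u, hu⟩ := exists_norm_eq ↥(V ⊓ Kᗮ) hr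
  exact ⟨u, u.2.1, u.2.2, hu⟩

end OrthogonalComplement

theorem Fin.ncard_setOf_val_lt {d k : ℕ} (hk : k ≤ d) : {j : Fin d | (j : ℕ) < k}.ncard = k := by
  rw [Set.ncard_eq_toFinset_card', Set.toFinset_ofPred, Fin.card_filter_val_lt, min_eq_right hk]

namespace EuclideanSpace

variable {ι : Type*} [Fintype ι]

def spanSubset (s : Set ι) : Submodule ℝ (EuclideanSpace ℝ ι) :=
  Submodule.span ℝ ((EuclideanSpace.basisFun ι ℝ).toBasis '' s)

theorem mem_spanSubset_iff {s : Set ι} {x : EuclideanSpace ℝ ι} :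
    x ∈ spanSubset s ↔ ∀ i ∉ s, x i = 0 := by
  rw [spanSubset, Module.Basis.mem_span_image]
  simp [Finsupp.support_subset_iff]

theorem finrank_spanSubset (s : Set ι) : Module.finrank ℝ (spanSubset s) = s.ncard := by
  have hli := (EuclideanSpace.basisFun ι ℝ).toBasis.linearIndepOn s |>.id_image
  rw [spanSubset, finrank_span_set_eq_card hli, Set.toFinset_card, Fintype.card_eq_nat_card,
    Nat.card_coe_set_eq]
  exact Set.ncard_image_of_injective s (EuclideanSpace.basisFun ι ℝ).toBasis.injective

theorem finrank_spanSubset_val_lt {d k : ℕ} (hk : k ≤ d) :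
    Module.finrank ℝ (spanSubset {j : Fin d | (j : ℕ) < k}) = k := by
  rw [finrank_spanSubset, Fin.ncard_setOf_val_lt hk]

end EuclideanSpace

namespace GaussKol

variable {d : ℕ}

theorem norm_sub_projK_le {K : Submodule ℝ (EuclideanSpace ℝ (Fin d))}
    (θ : EuclideanSpace ℝ (Fin d)) {x : EuclideanSpace ℝ (Fin d)} (hx : x ∈ K) :
    ‖θ - projK K θ‖ ≤ ‖θ - x‖ := by
  rw [projK, ← Submodule.starProjection_apply, Submodule.starProjection_minimal]
  have hbdd : BddBelow (range fun y : K => ‖θ - (y : EuclideanSpace ℝ (Fin d))‖) :=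
    ⟨0, by rintro _ ⟨_, rfl⟩; positivity⟩
  exact ciInf_le hbdd ⟨x, hx⟩

theorem projK_eq_zero_of_mem_orthogonal {K : Submodule ℝ (EuclideanSpace ℝ (Fin d))}
    {u : EuclideanSpace ℝ (Fin d)} (hu : u ∈ Kᗮ) : projK K u = 0 := by
  rw [projK, Submodule.orthogonalProjectionOnto_apply_of_mem_orthogonal hu, ZeroMemClass.coe_zero]

section KolmogorovWidth

variable {k : ℕ} {S : Set (EuclideanSpace ℝ (Fin d))} {c : ℝ}

theorem kolWidth_le (K : Submodule ℝ (EuclideanSpace ℝ (Fin d))) (hK : Module.finrank ℝ K = k)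
    (hc : 0 ≤ c) (h : ∀ θ ∈ S, ‖θ - projK K θ‖ ≤ c) : kolWidth k S ≤ c :=
  ciInf_le_of_le ⟨0, by
      rintro _ ⟨K, rfl⟩
      exact Real.iSup_nonneg fun _ => Real.iSup_nonneg fun _ => norm_nonneg _⟩
    ⟨K, hK⟩ (Real.iSup_le (fun θ => Real.iSup_le (h θ) hc) hc)

theorem le_kolWidth (hk : k ≤ d) {R : ℝ} (hS : S ⊆ closedBall 0 R)
    (h : ∀ K : Submodule ℝ (EuclideanSpace ℝ (Fin d)), Module.finrank ℝ K = k →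
      ∃ θ ∈ S, c ≤ ‖θ - projK K θ‖) :
    c ≤ kolWidth k S := by
  have : Nonempty {K : Submodule ℝ (EuclideanSpace ℝ (Fin d)) // Module.finrank ℝ K = k} :=
    ⟨⟨_, EuclideanSpace.finrank_spanSubset_val_lt hk⟩⟩
  refine le_ciInf fun ⟨K, hK⟩ => ?_
  obtain ⟨θ, hθS, hcθ⟩ := h K hK
  have hR : 0 ≤ R := (norm_nonneg θ).trans (mem_closedBall_zero_iff.mp (hS hθS))
  have hbdd : BddAbove (range fun θ => ⨆ _ : θ ∈ S, ‖θ - projK K θ‖) := by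
    refine ⟨R, ?_⟩
    rintro _ ⟨θ, rfl⟩
    refine Real.iSup_le (fun hθ => ?_) hR
    exact (norm_sub_projK_le θ K.zero_mem).trans (by simpa using hS hθ)
  exact hcθ.trans (le_ciSup_of_le hbdd θ (by rw [ciSup_pos hθS]))

end KolmogorovWidth

variable {μ : Fin d → ℝ}

theorem shiftedEllipse_zero (μ : Fin d → ℝ) : shiftedEllipse μ 0 = ellipse μ := by
  simp [shiftedEllipse]

theorem norm_sq_le_mul_enormSq (hμ : ∀ j, 0 < μ j) {v : EuclideanSpace ℝ (Fin d)} {c : ℝ}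
    (hv : ∀ j, v j ≠ 0 → μ j ≤ c) : ‖v‖ ^ 2 ≤ c * enormSq μ v := by
  rw [EuclideanSpace.norm_sq_eq, enormSq, Finset.mul_sum]
  refine Finset.sum_le_sum fun j _ => ?_
  rw [Real.norm_eq_abs, sq_abs]
  by_cases hj : v j = 0
  · simp [hj]
  · rw [mul_div_assoc', le_div_iff₀ (hμ j), mul_comm c]
    exact mul_le_mul_of_nonneg_left (hv j hj) (sq_nonneg _)

theorem mul_enormSq_le_norm_sq (hμ : ∀ j, 0 < μ j) {v : EuclideanSpace ℝ (Fin d)} {c : ℝ}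
    (hv : ∀ j, v j ≠ 0 → c ≤ μ j) : c * enormSq μ v ≤ ‖v‖ ^ 2 := by
  rw [EuclideanSpace.norm_sq_eq, enormSq, Finset.mul_sum]
  refine Finset.sum_le_sum fun j _ => ?_
  rw [Real.norm_eq_abs, sq_abs]
  by_cases hj : v j = 0
  · simp [hj]
  · rw [mul_div_assoc', div_le_iff₀ (hμ j), mul_comm c]
    exact mul_le_mul_of_nonneg_left (hv j hj) (sq_nonneg _)

-- The paper's `μ_{k+1}`: the coordinates `Fin d` start at `0`, and `μ_{d+1} = 0`.
def axisAfter (μ : Fin d → ℝ) (k : ℕ) : ℝ :=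
  if hk : k < d then μ ⟨k, hk⟩ else 0

theorem axisAfter_nonneg (hμ : ∀ j, 0 < μ j) (k : ℕ) : 0 ≤ axisAfter μ k := by
  unfold axisAfter
  split_ifs
  exacts [(hμ _).le, le_rfl]

theorem le_axisAfter (hμmono : ∀ i j : Fin d, i ≤ j → μ j ≤ μ i) {k : ℕ} {j : Fin d}
    (hj : k ≤ j) : μ j ≤ axisAfter μ k := by
  rw [axisAfter, dif_pos (hj.trans_lt j.isLt)]
  exact hμmono _ _ hj

theorem norm_sub_projK_spanSubset_le (hμ : ∀ j, 0 < μ j)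
    (hμmono : ∀ i j : Fin d, i ≤ j → μ j ≤ μ i) (k : ℕ) {θ : EuclideanSpace ℝ (Fin d)}
    (hθ : θ ∈ ellipse μ) :
    ‖θ - projK (EuclideanSpace.spanSubset {j : Fin d | (j : ℕ) < k}) θ‖ ≤ √(axisAfter μ k) := by
  set tail : EuclideanSpace ℝ (Fin d) := WithLp.toLp 2 fun j => if k ≤ j then θ j else 0
  have hhead : θ - tail ∈ EuclideanSpace.spanSubset {j : Fin d | (j : ℕ) < k} := by
    rw [EuclideanSpace.mem_spanSubset_iff]
    intro j hj
    simp_all [tail]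
  have htail : enormSq μ tail ≤ enormSq μ θ := by
    refine Finset.sum_le_sum fun j _ => ?_
    by_cases hj : k ≤ (j : ℕ)
    · simp [tail, hj]
    · have := (hμ j).le
      simp only [tail, hj, if_false]
      rw [zero_pow two_ne_zero, zero_div]
      positivity
  calc ‖θ - projK _ θ‖ ≤ ‖tail‖ := by simpa using norm_sub_projK_le θ hhead
    _ ≤ √(axisAfter μ k) := by
      refine Real.le_sqrt_of_sq_le ?_
      calc ‖tail‖ ^ 2 ≤ axisAfter μ k * enormSq μ tail :=
            norm_sq_le_mul_enormSq hμ fun j hj =>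
              le_axisAfter hμmono (by by_contra h; simp_all [tail])
        _ ≤ axisAfter μ k * 1 := by
            gcongr
            · exact axisAfter_nonneg hμ k
            · exact htail.trans hθ
        _ = axisAfter μ k := mul_one _

theorem kolWidth_ellipse_inter_closedBall (hμ : ∀ j, 0 < μ j)
    (hμmono : ∀ i j : Fin d, i ≤ j → μ j ≤ μ i) {k : ℕ} (hk : k ≤ d) {r : ℝ} (hr : 0 ≤ r) :
    kolWidth k (ellipse μ ∩ closedBall 0 r) = min √(axisAfter μ k) r := by
  apply le_antisymm
  · refine kolWidth_le _ (EuclideanSpace.finrank_spanSubset_val_lt hk)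
      (le_min (Real.sqrt_nonneg _) hr) fun θ ⟨hθE, hθr⟩ => le_min ?_ ?_
    · exact norm_sub_projK_spanSubset_le hμ hμmono k hθE
    · exact (norm_sub_projK_le θ (Submodule.zero_mem _)).trans (by simpa using hθr)
  refine le_kolWidth hk inter_subset_right fun K hK => ?_
  obtain hk | rfl := hk.lt_or_eq
  · set ρ : ℝ := min √(μ ⟨k, hk⟩) r
    have hρ : 0 ≤ ρ := le_min (Real.sqrt_nonneg _) hr
    obtain ⟨u, huV, huK, hu⟩ := Submodule.exists_mem_inf_orthogonal_norm_eq
      (V := EuclideanSpace.spanSubset {j : Fin d | (j : ℕ) < k + 1})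
      (by rw [hK, EuclideanSpace.finrank_spanSubset_val_lt hk]; omega) hρ
    refine ⟨u, ⟨?_, by rw [mem_closedBall_zero_iff, hu]; exact min_le_right _ _⟩, ?_⟩
    · have hμu : μ ⟨k, hk⟩ * enormSq μ u ≤ μ ⟨k, hk⟩ * 1 := by
        refine (mul_enormSq_le_norm_sq hμ fun j hj => hμmono _ _ ?_).trans ?_
        · by_contra hjk
          simp only [Fin.le_def, not_le] at hjk
          exact hj (EuclideanSpace.mem_spanSubset_iff.mp huV j (by simp; omega))
        · rw [hu, mul_one]
          exact (Real.le_sqrt hρ (hμ _).le).mp (min_le_left _ _)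
      exact le_of_mul_le_mul_left hμu (hμ _)
    · rw [projK_eq_zero_of_mem_orthogonal huK, sub_zero, hu, axisAfter, dif_pos hk]
  · refine ⟨0, ⟨?_, mem_closedBall_self hr⟩, ?_⟩
    · simp [ellipse]
    · simp [axisAfter]

end GaussKol

theorem critDim_zero_eq_general {d : ℕ} (η : ℝ) (hη1 : η < 0.1)
    (μ : Fin d → ℝ) (hμpos : ∀ i, 0 < μ i) (hμmono : ∀ i j : Fin d, i ≤ j → μ j ≤ μ i)
    (δ : ℝ) (hδ : 0 < δ) :
    critDim η μ 0 δ =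
      if ({k : ℕ | 1 ≤ k ∧ k ≤ d ∧
            (if hk : k < d then μ ⟨k, hk⟩ else 0) ≤ 81 / 100 * δ ^ 2}).Nonempty
      then sInf {k : ℕ | 1 ≤ k ∧ k ≤ d ∧
            (if hk : k < d then μ ⟨k, hk⟩ else 0) ≤ 81 / 100 * δ ^ 2}
      else d := by
  show _ = if ({k : ℕ | 1 ≤ k ∧ k ≤ d ∧ axisAfter μ k ≤ 81 / 100 * δ ^ 2}).Nonempty
    then sInf {k : ℕ | 1 ≤ k ∧ k ≤ d ∧ axisAfter μ k ≤ 81 / 100 * δ ^ 2} else d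
  have hball : 9 / 10 * δ < (1 - η) * δ := by
    norm_num at hη1
    nlinarith
  have hwidth : ∀ k ≤ d, kolWidth k (shiftedEllipse μ 0 ∩ closedBall 0 ((1 - η) * δ))
      ≤ 9 / 10 * δ ↔ axisAfter μ k ≤ 81 / 100 * δ ^ 2 := fun k hk => by
    rw [shiftedEllipse_zero, kolWidth_ellipse_inter_closedBall hμpos hμmono hk (by linarith),
      min_le_iff, or_iff_left hball.not_ge, Real.sqrt_le_left (by positivity), mul_pow]
    norm_num
  have hcrit : critDim η μ 0 δ
      = sInf {k : ℕ | 1 ≤ k ∧ k ≤ d ∧ axisAfter μ k ≤ 81 / 100 * δ ^ 2} := by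
    unfold critDim
    congr 1
    ext k
    exact and_congr_right fun _ => and_congr_right (hwidth k)
  rw [hcrit]
  split_ifs with hne
  · rfl
  · obtain rfl : d = 0 := by
      by_contra hd
      exact hne ⟨d, by omega, le_rfl, by simp [axisAfter]; positivity⟩
    rw [not_nonempty_iff_eq_empty.mp hne, Nat.sInf_empty]

/-- **Explicit form of the critical dimension at zero.**
For every `δ > 0`, `k(0, δ) = min{k ∈ {1, …, d} : μ_{k+1} ≤ (81/100) δ²}` (with
`μ_{d+1} := 0`), with the convention that `k(0, δ) = d` if that set is empty. -/
theorem critDim_zero_eq {d : ℕ} (η : ℝ) (hη0 : 0 < η) (hη1 : η < 0.1)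
    (μ : Fin d → ℝ) (hμpos : ∀ i, 0 < μ i) (hμmono : ∀ i j : Fin d, i ≤ j → μ j ≤ μ i)
    (δ : ℝ) (hδ : 0 < δ) :
    critDim η μ 0 δ =
      if ({k : ℕ | 1 ≤ k ∧ k ≤ d ∧
            (if hk : k < d then μ ⟨k, hk⟩ else 0) ≤ 81 / 100 * δ ^ 2}).Nonempty
      then sInf {k : ℕ | 1 ≤ k ∧ k ≤ d ∧
            (if hk : k < d then μ ⟨k, hk⟩ else 0) ≤ 81 / 100 * δ ^ 2}
      else d :=
  critDim_zero_eq_general η hη1 μ hμpos hμmono δ hδ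
end
end
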